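/- For all i ≥ 7, the string F_{i-2} Q_i occurs in F_i exactly at positions 1 and f_{i-2}+1. -/

import Mathlib

/-- Fibonacci words over the alphabet {a, b}, encoded with `false` = a, `true` = b:
`F 1 = b`, `F 2 = a`, `F i = F (i-1) ++ F (i-2)` for `i ≥ 3`. -/
def fibw : ℕ → List Bool
  | 0 => []
  | 1 => [true]
  | 2 => [false]
  | n + 3 => fibw (n + 2) ++ fibw (n + 1)

/-- `S` occurs in `T` at (1-based) position `p`. -/
def occursAt (S T : List Bool) (p : ℕ) : Prop :=
  1 ≤ p ∧ S <+: T.drop (p - 1)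


/-- `Q i = F (i-5) F (i-6) ⋯ F 3 F 2`. -/
def Qw (i : ℕ) : List Bool :=
  ((List.range (i - 6)).map (fun k => fibw (i - 5 - k))).flatten

def Pw (n : ℕ) : List Bool := (fibw n).take (Nat.fib n - 2)

def tw (n : ℕ) : List Bool := if n % 2 = 0 then [true, false] else [false, true]

lemma length_fibw : ∀ n, (fibw n).length = Nat.fib n
  | 0 => rfl
  | 1 => rfl
  | 2 => rfl
  | n + 3 => by
    rw [fibw, List.length_append, length_fibw (n+1), length_fibw (n+2),
      Nat.fib_add_two (n := n+1)]
    ring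

lemma fib_two_le (n : ℕ) : 2 ≤ Nat.fib (n + 3) := Nat.fib_mono (show 3 ≤ n + 3 by omega)
lemma fib_three_le (n : ℕ) : 3 ≤ Nat.fib (n + 4) := Nat.fib_mono (show 4 ≤ n + 4 by omega)

lemma PP (n : ℕ) : Pw (n + 5) = fibw (n + 4) ++ Pw (n + 3) := by
  have h2 := fib_two_le n
  have e1 : Nat.fib (n+5) = Nat.fib (n+3) + Nat.fib (n+4) := Nat.fib_add_two
  have harith : Nat.fib (n+5) - 2 - (fibw (n+4)).length = Nat.fib (n+3) - 2 := by
    rw [length_fibw]; omega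
  rw [Pw, Pw, show fibw (n+5) = fibw (n+4) ++ fibw (n+3) from rfl,
    List.take_append, harith,
    List.take_of_length_le (by rw [length_fibw]; omega)]

lemma tw_two (n : ℕ) : tw (n + 2) = tw n := by simp [tw, Nat.add_mod]

lemma T2 : ∀ n, fibw (n + 3) = Pw (n + 3) ++ tw (n + 3)
  | 0 => by decide
  | 1 => by decide
  | n + 2 => by
    rw [show fibw (n+5) = fibw (n+4) ++ fibw (n+3) from rfl, T2 n, PP n,
      tw_two (n+3), List.append_assoc]

lemma COMM : ∀ n, fibw (n + 1) ++ fibw (n + 2) = Pw (n + 3) ++ tw (n + 2)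
  | 0 => by decide
  | 1 => by decide
  | n + 2 => by
    rw [show fibw (n+4) = fibw (n+3) ++ fibw (n+2) from rfl, PP n,
      show fibw (n+3) = fibw (n+2) ++ fibw (n+1) from rfl, tw_two (n+2)]
    have := COMM n
    simp only [List.append_assoc] at this ⊢
    rw [this, show fibw (n+4) = fibw (n+3) ++ fibw (n+2) from rfl,
      show fibw (n+3) = fibw (n+2) ++ fibw (n+1) from rfl]
    simp [List.append_assoc]

lemma PP' (n : ℕ) : fibw (n + 2) ++ Pw (n + 3) = Pw (n + 4) := by
  have h1 := COMM (n + 1)   -- F(n+2) ++ F(n+3) = P(n+4) ++ t(n+3)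
  rw [T2 n] at h1           -- F(n+3) = P(n+3) ++ t(n+3)
  rw [← List.append_assoc] at h1
  exact List.append_cancel_right h1

lemma prefix_append_iff {S A : List Bool} (Y : List Bool) (h : S.length ≤ A.length) :
    S <+: A ++ Y ↔ S <+: A := by
  constructor
  · intro h'
    have e : S = (A ++ Y).take S.length := List.prefix_iff_eq_take.mp h'
    rw [List.take_append, Nat.sub_eq_zero_of_le h, List.take_zero,
      List.append_nil] at e
    rw [e]
    exact List.take_prefix _ _
  · intro h'
    exact h'.trans (List.prefix_append A Y)

lemma occ_left {S X : List Bool} (Y : List Bool) {q : ℕ} (h : q + S.length ≤ X.length) :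
    (S <+: (X ++ Y).drop q ↔ S <+: X.drop q) := by
  rw [List.drop_append_of_le_length (by omega)]
  exact prefix_append_iff Y (by rw [List.length_drop]; omega)

lemma occ_right {S X Y : List Bool} {q : ℕ} (h : X.length ≤ q) :
    (S <+: (X ++ Y).drop q ↔ S <+: Y.drop (q - X.length)) := by
  rw [show q = X.length + (q - X.length) by omega, List.drop_length_add_append]
  simp

lemma Pw_prefix (n : ℕ) : Pw n <+: fibw n := List.take_prefix _ _

lemma fibw_prefix (n : ℕ) : fibw (n + 2) <+: fibw (n + 3) :=
  ⟨fibw (n + 1), rfl⟩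

lemma Pw_prefix_succ (n : ℕ) : Pw (n + 2) <+: Pw (n + 3) := by
  refine List.prefix_of_prefix_length_le
    ((Pw_prefix (n+2)).trans (fibw_prefix n)) (Pw_prefix (n+3)) ?_
  rw [Pw, Pw, List.length_take, List.length_take, length_fibw, length_fibw]
  have := Nat.fib_mono (show n + 2 ≤ n + 3 by omega)
  omega

lemma Mis (n : ℕ) (R : List Bool) :
    ¬ (Pw (n + 5) <+: fibw (n + 2) ++ (fibw (n + 3) ++ R)) := by
  intro h
  have ht : fibw (n + 4) = Pw (n + 4) ++ tw (n + 4) := T2 (n + 1)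
  have hc : fibw (n + 2) ++ fibw (n + 3) = Pw (n + 4) ++ tw (n + 3) := COMM (n + 1)
  rw [PP n, ht, ← List.append_assoc, hc,
    List.append_assoc, List.append_assoc, List.prefix_append_right_inj] at h
  obtain ⟨w, hw⟩ := h
  rcases Nat.even_or_odd n with he | ho
  · obtain ⟨k, hk⟩ := he
    have h4 : (n+4) % 2 = 0 := by omega
    have h3 : (n+3) % 2 = 1 := by omega
    simp [tw, h4, h3] at hw
  · obtain ⟨k, hk⟩ := ho
    have h4 : (n+4) % 2 = 1 := by omega
    have h3 : (n+3) % 2 = 0 := by omega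
    simp [tw, h4, h3] at hw

lemma length_Pw (n : ℕ) : (Pw n).length = Nat.fib n - 2 := by
  rw [Pw, List.length_take, length_fibw]; omega

lemma prefix_drop {l₁ l₂ : List Bool} (h : l₁ <+: l₂) {n : ℕ} (hn : n ≤ l₁.length) :
    l₁.drop n <+: l₂.drop n := by
  obtain ⟨s, rfl⟩ := h
  rw [List.drop_append_of_le_length hn]
  exact ⟨s, rfl⟩

lemma B0 : ∀ q, (Pw 5 <+: (fibw 7).drop q ↔
    (q = 0 ∨ q = Nat.fib 4 ∨ q = Nat.fib 5 ∨ q = Nat.fib 6)) := by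
  intro q
  rcases lt_or_ge q 14 with h | h
  · interval_cases q <;> decide
  · constructor
    · intro hp
      have := hp.length_le
      rw [length_Pw, List.length_drop, length_fibw] at this
      simp [Nat.fib] at this
      omega
    · intro hp
      exfalso
      simp [Nat.fib] at hp
      omega

lemma A_of_B (m : ℕ)
    (hB : ∀ q, (Pw (m+5) <+: (fibw (m+7)).drop q ↔
      (q = 0 ∨ q = Nat.fib (m+4) ∨ q = Nat.fib (m+5) ∨ q = Nat.fib (m+6)))) :
    ∀ q, (Pw (m+6) <+: (fibw (m+7)).drop q ↔ (q = 0 ∨ q = Nat.fib (m+5))) := by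
  have e5 : Nat.fib (m+5) = Nat.fib (m+3) + Nat.fib (m+4) := Nat.fib_add_two
  have e6 : Nat.fib (m+6) = Nat.fib (m+4) + Nat.fib (m+5) := Nat.fib_add_two
  have e7 : Nat.fib (m+7) = Nat.fib (m+5) + Nat.fib (m+6) := Nat.fib_add_two
  have g3 : 2 ≤ Nat.fib (m+3) := fib_two_le m
  have g4 : 3 ≤ Nat.fib (m+4) := fib_three_le m
  have hP56 : Pw (m+5) <+: Pw (m+6) := Pw_prefix_succ (m+3)
  intro q
  constructor
  · intro h
    have hlen := h.length_le
    rw [length_Pw, List.length_drop, length_fibw] at hlen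
    have hq : q ≤ Nat.fib (m+5) + 2 := by omega
    have h5 : Pw (m+5) <+: (fibw (m+7)).drop q := hP56.trans h
    rcases (hB q).mp h5 with h0 | h4 | h5' | h6
    · exact Or.inl h0
    · exfalso
      subst h4
      have h6' : fibw (m+6) = fibw (m+4) ++ (fibw (m+3) ++ fibw (m+4)) := by
        rw [show fibw (m+6) = fibw (m+5) ++ fibw (m+4) from rfl,
            show fibw (m+5) = fibw (m+4) ++ fibw (m+3) from rfl, List.append_assoc]
      have hdec : fibw (m+7) = fibw (m+4) ++ (fibw (m+3) ++ (fibw (m+4) ++ fibw (m+5))) := by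
        rw [show fibw (m+7) = fibw (m+6) ++ fibw (m+5) from rfl, h6']
        simp [List.append_assoc]
      rw [hdec, show Nat.fib (m+4) = (fibw (m+4)).length from (length_fibw _).symm,
        List.drop_left] at h
      exact Mis (m+1) (fibw (m+5)) h
    · exact Or.inr h5'
    · exfalso; omega
  · intro h
    rcases h with h0 | hf
    · subst h0
      rw [List.drop_zero, show fibw (m+7) = fibw (m+6) ++ fibw (m+5) from rfl]
      exact (Pw_prefix (m+6)).trans (List.prefix_append _ _)
    · subst hf
      have hdec : fibw (m+7) = fibw (m+5) ++ (fibw (m+4) ++ fibw (m+5)) := by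
        rw [show fibw (m+7) = fibw (m+6) ++ fibw (m+5) from rfl,
            show fibw (m+6) = fibw (m+5) ++ fibw (m+4) from rfl, List.append_assoc]
      rw [hdec, show Nat.fib (m+5) = (fibw (m+5)).length from (length_fibw _).symm,
        List.drop_left]
      have hc : fibw (m+4) ++ fibw (m+5) = Pw (m+6) ++ tw (m+5) := COMM (m+3)
      rw [hc]
      exact List.prefix_append _ _

lemma Bstep (m : ℕ)
    (hB : ∀ q, (Pw (m+5) <+: (fibw (m+7)).drop q ↔
      (q = 0 ∨ q = Nat.fib (m+4) ∨ q = Nat.fib (m+5) ∨ q = Nat.fib (m+6)))) :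
    ∀ q, (Pw (m+6) <+: (fibw (m+8)).drop q ↔
      (q = 0 ∨ q = Nat.fib (m+5) ∨ q = Nat.fib (m+6) ∨ q = Nat.fib (m+7))) := by
  have hA := A_of_B m hB
  have e5 : Nat.fib (m+5) = Nat.fib (m+3) + Nat.fib (m+4) := Nat.fib_add_two
  have e6 : Nat.fib (m+6) = Nat.fib (m+4) + Nat.fib (m+5) := Nat.fib_add_two
  have e7 : Nat.fib (m+7) = Nat.fib (m+5) + Nat.fib (m+6) := Nat.fib_add_two
  have e8 : Nat.fib (m+8) = Nat.fib (m+6) + Nat.fib (m+7) := Nat.fib_add_two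
  have g3 : 2 ≤ Nat.fib (m+3) := fib_two_le m
  have g4 : 3 ≤ Nat.fib (m+4) := fib_three_le m
  have hP56 : Pw (m+5) <+: Pw (m+6) := Pw_prefix_succ (m+3)
  have hP67 : Pw (m+6) <+: Pw (m+7) := Pw_prefix_succ (m+4)
  intro q
  constructor
  · intro h
    have hlen := h.length_le
    rw [length_Pw, List.length_drop, length_fibw] at hlen
    have hqtop : q ≤ Nat.fib (m+7) + 2 := by omega
    by_cases hc : q ≤ Nat.fib (m+6) + 2
    · -- occurrence of the prefix Pw (m+5) lies inside the prefix fibw (m+7)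
      have h5 : Pw (m+5) <+: (fibw (m+8)).drop q := hP56.trans h
      rw [show fibw (m+8) = fibw (m+7) ++ fibw (m+6) from rfl] at h5
      have h5' : Pw (m+5) <+: (fibw (m+7)).drop q :=
        (occ_left _ (by rw [length_Pw, length_fibw]; omega)).mp h5
      rcases (hB q).mp h5' with h0 | h4 | h5q | h6
      · exact Or.inl h0
      · exfalso
        subst h4
        have h6' : fibw (m+6) = fibw (m+4) ++ (fibw (m+3) ++ fibw (m+4)) := by
          rw [show fibw (m+6) = fibw (m+5) ++ fibw (m+4) from rfl,
              show fibw (m+5) = fibw (m+4) ++ fibw (m+3) from rfl, List.append_assoc]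
        have hdec : fibw (m+8) =
            fibw (m+4) ++ (fibw (m+3) ++ (fibw (m+4) ++ (fibw (m+5) ++ fibw (m+6)))) := by
          rw [show fibw (m+8) = fibw (m+7) ++ fibw (m+6) from rfl,
              show fibw (m+7) = fibw (m+6) ++ fibw (m+5) from rfl]
          nth_rewrite 1 [h6']
          simp [List.append_assoc]
        rw [hdec, show Nat.fib (m+4) = (fibw (m+4)).length from (length_fibw _).symm,
          List.drop_left] at h
        exact Mis (m+1) (fibw (m+5) ++ fibw (m+6)) h
      · exact Or.inr (Or.inl h5q)
      · exact Or.inr (Or.inr (Or.inl h6))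
    · -- q ≥ fib (m+6) + 3 : occurrence inside the suffix fibw (m+5) ++ fibw (m+6)
      have hq6 : Nat.fib (m+6) + 3 ≤ q := by omega
      rw [show fibw (m+8) = fibw (m+6) ++ (fibw (m+5) ++ fibw (m+6)) by
        rw [show fibw (m+8) = fibw (m+7) ++ fibw (m+6) from rfl,
            show fibw (m+7) = fibw (m+6) ++ fibw (m+5) from rfl, List.append_assoc]] at h
      have h2 := (occ_right (by rw [length_fibw]; omega)).mp h
      rw [length_fibw] at h2
      have hcomm : fibw (m+5) ++ fibw (m+6) = Pw (m+7) ++ tw (m+6) := COMM (m+4)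
      rw [hcomm] at h2
      by_cases hsub : q - Nat.fib (m+6) ≤ Nat.fib (m+5)
      · have h3 : Pw (m+6) <+: (Pw (m+7)).drop (q - Nat.fib (m+6)) :=
          (occ_left _ (by rw [length_Pw, length_Pw]; omega)).mp h2
        have h4 : Pw (m+6) <+: (fibw (m+7)).drop (q - Nat.fib (m+6)) :=
          h3.trans (prefix_drop (Pw_prefix (m+7)) (by rw [length_Pw]; omega))
        rcases (hA _).mp h4 with h0 | hf
        · exfalso; omega
        · have : q = Nat.fib (m+7) := by omega
          exact Or.inr (Or.inr (Or.inr this))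
      · exfalso
        have h5 : Pw (m+5) <+: ((Pw (m+7) ++ tw (m+6)).drop (q - Nat.fib (m+6))) :=
          hP56.trans h2
        have h3 : Pw (m+5) <+: (Pw (m+7)).drop (q - Nat.fib (m+6)) :=
          (occ_left _ (by rw [length_Pw, length_Pw]; omega)).mp h5
        have h4 : Pw (m+5) <+: (fibw (m+7)).drop (q - Nat.fib (m+6)) :=
          h3.trans (prefix_drop (Pw_prefix (m+7)) (by rw [length_Pw]; omega))
        have hmono := Nat.fib_mono (show m+4 ≤ m+5 by omega)
        rcases (hB _).mp h4 with h0 | h4' | h5' | h6' <;> omega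
  · intro h
    rcases h with h0 | h5 | h6 | h7
    · subst h0
      rw [List.drop_zero, show fibw (m+8) = fibw (m+7) ++ fibw (m+6) from rfl,
        show fibw (m+7) = fibw (m+6) ++ fibw (m+5) from rfl, List.append_assoc]
      exact (Pw_prefix (m+6)).trans (List.prefix_append _ _)
    · subst h5
      have hdec : fibw (m+8) = fibw (m+5) ++ (fibw (m+4) ++ (fibw (m+5) ++ fibw (m+6))) := by
        rw [show fibw (m+8) = fibw (m+7) ++ fibw (m+6) from rfl,
            show fibw (m+7) = fibw (m+6) ++ fibw (m+5) from rfl,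
            show fibw (m+6) = fibw (m+5) ++ fibw (m+4) from rfl]
        simp [List.append_assoc]
      rw [hdec, show Nat.fib (m+5) = (fibw (m+5)).length from (length_fibw _).symm,
        List.drop_left]
      have hc : fibw (m+4) ++ fibw (m+5) = Pw (m+6) ++ tw (m+5) := COMM (m+3)
      rw [← List.append_assoc, hc, List.append_assoc]
      exact List.prefix_append _ _
    · subst h6
      rw [show fibw (m+8) = fibw (m+6) ++ (fibw (m+5) ++ fibw (m+6)) by
        rw [show fibw (m+8) = fibw (m+7) ++ fibw (m+6) from rfl,
            show fibw (m+7) = fibw (m+6) ++ fibw (m+5) from rfl, List.append_assoc],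
        show Nat.fib (m+6) = (fibw (m+6)).length from (length_fibw _).symm, List.drop_left]
      have hc : fibw (m+5) ++ fibw (m+6) = Pw (m+7) ++ tw (m+6) := COMM (m+4)
      rw [hc]
      exact hP67.trans (List.prefix_append _ _)
    · subst h7
      rw [show fibw (m+8) = fibw (m+7) ++ fibw (m+6) from rfl,
        show Nat.fib (m+7) = (fibw (m+7)).length from (length_fibw _).symm, List.drop_left]
      exact (Pw_prefix (m+6)).trans (List.prefix_refl _)

lemma Blem : ∀ m q, (Pw (m+5) <+: (fibw (m+7)).drop q ↔
    (q = 0 ∨ q = Nat.fib (m+4) ∨ q = Nat.fib (m+5) ∨ q = Nat.fib (m+6)))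
  | 0 => B0
  | m + 1 => Bstep m (Blem m)

lemma Alem (m : ℕ) : ∀ q, (Pw (m+6) <+: (fibw (m+7)).drop q ↔ (q = 0 ∨ q = Nat.fib (m+5))) :=
  A_of_B m (Blem m)

lemma Qlem : ∀ j, Qw (j + 7) = Pw (j + 4)
  | 0 => by
    show (([0].map (fun k => fibw (2 - k)))).flatten = Pw 4
    decide
  | j + 1 => by
    have h0 : Qw (j+8) = ((List.range (j+2)).map (fun k => fibw (j+3-k))).flatten := rfl
    have h1 : Qw (j+8) = fibw (j+3) ++ Qw (j+7) := by
      rw [h0, List.range_succ_eq_map, List.map_cons, List.flatten_cons, List.map_map]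
      have : (fun k => fibw (j+3-k)) ∘ Nat.succ = (fun k => fibw (j+2-k)) := by
        funext k
        simp only [Function.comp]
        congr 1
        omega
      rw [this, Nat.sub_zero]
      rfl
    rw [h1, Qlem j]
    exact PP' (j + 1)


theorem fib_sub2_q_occurrences (i : ℕ) (hi : 7 ≤ i) (p : ℕ) :
    occursAt (fibw (i - 2) ++ Qw i) (fibw i) p ↔
      p = 1 ∨ p = (fibw (i - 2)).length + 1 := by
  obtain ⟨j, rfl⟩ : ∃ j, i = j + 7 := ⟨i - 7, by omega⟩
  have hpat : fibw (j + 7 - 2) ++ Qw (j + 7) = Pw (j + 6) := by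
    show fibw (j + 5) ++ Qw (j + 7) = Pw (j + 6)
    rw [Qlem j]
    exact (PP (j + 1)).symm
  have hlen : (fibw (j + 7 - 2)).length = Nat.fib (j + 5) := length_fibw (j + 5)
  rw [occursAt, hpat, hlen]
  have hA := Alem j (p - 1)
  have hf : 1 ≤ Nat.fib (j + 5) := Nat.fib_pos.mpr (by omega)
  constructor
  · rintro ⟨hp1, hp2⟩
    rcases hA.mp hp2 with h | h
    · left; omega
    · right; omega
  · rintro (h | h)
    · subst h; exact ⟨le_refl 1, hA.mpr (Or.inl rfl)⟩
    · subst h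
      exact ⟨by omega, hA.mpr (Or.inr (by omega))⟩
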